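/- arXiv:1706.05264 — 2 statements merged into one kernel-verified Lean document; each statement's English description precedes it below -/
import Mathlib

section
/- Let p be a probability distribution on k elements with non-increasingly ordered entries and let δ ≥ 0. Then the steepest δ-approximation p̄^(δ) of p is a probability distribution (its entries are nonnegative and sum to 1), its entries are non-increasingly ordered, and ‖p − p̄^(δ)‖ ≤ δ. -/
open Finset

noncomputable section

/-- The ℓ¹ distance `‖a − b‖ = Σᵢ |aᵢ − bᵢ|` between two vectors in `ℝ^k`. -/
def l1dist {k : ℕ} (a b : Fin k → ℝ) : ℝ := ∑ i, |a i - b i|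

/-- A probability distribution on `k` elements: nonnegative entries summing to 1. -/
def IsProbDist {k : ℕ} (p : Fin k → ℝ) : Prop := (∀ i, 0 ≤ p i) ∧ ∑ i, p i = 1

/-- The vector `a` rearranged in non-increasing order, `a↓`. -/
def descSort {k : ℕ} (a : Fin k → ℝ) : Fin k → ℝ := fun i => a (Tuple.sort a i.rev)

/-- The sum of the first `l` entries of `a` (1-based indexing: entries `1,…,l`). -/
def psum {k : ℕ} (a : Fin k → ℝ) (l : ℕ) : ℝ :=
  ∑ i ∈ univ.filter (fun i : Fin k => (i : ℕ) < l), a i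

/-- The sum of the entries of `a` from position `l` to `k` (1-based indexing). -/
def tailSum {k : ℕ} (a : Fin k → ℝ) (l : ℕ) : ℝ :=
  ∑ i ∈ univ.filter (fun i : Fin k => l ≤ (i : ℕ) + 1), a i

/-- `a` majorizes `b` (`a ≻ b`): the total sums agree and all partial sums of the
non-increasing rearrangements satisfy `Σ_{i=1}^l a↓ᵢ ≥ Σ_{i=1}^l b↓ᵢ` for `l = 1,…,k`. -/
def Majorizes {k : ℕ} (a b : Fin k → ℝ) : Prop :=
  (∑ i, a i = ∑ i, b i) ∧
  ∀ l : ℕ, 1 ≤ l → l ≤ k → psum (descSort b) l ≤ psum (descSort a) l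

/-- The distribution `e₁ = (1,0,…,0)`. -/
def e1 (k : ℕ) : Fin k → ℝ := fun i => if (i : ℕ) = 0 then 1 else 0

/-- The uniform distribution `η = (1/k,…,1/k)`. -/
def unif (k : ℕ) : Fin k → ℝ := fun _ => (k : ℝ)⁻¹

/-- The unnormalised vector `r` in the construction of the steepest approximation:
`r₁ = p₁ + δ/2`, `rᵢ = pᵢ` otherwise. -/
def steepR {k : ℕ} (δ : ℝ) (p : Fin k → ℝ) : Fin k → ℝ :=
  fun i => if (i : ℕ) = 0 then p i + δ / 2 else p i

/-- `lstar ∈ {1,…,k}` is the truncation index of the steepest `δ`-approximation of `p`: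
`Σ_{i=1}^{l*} rᵢ ≤ 1 < Σ_{i=1}^{l*+1} rᵢ` (the second sum being meaningful for `l* < k`). -/
def IsTruncIdx {k : ℕ} (δ : ℝ) (p : Fin k → ℝ) (lstar : ℕ) : Prop :=
  1 ≤ lstar ∧ lstar ≤ k ∧ psum (steepR δ p) lstar ≤ 1 ∧
    (lstar < k → 1 < psum (steepR δ p) (lstar + 1))

/-- `pbar` is the steepest `δ`-approximation `p̄^(δ)` of `p` (assumed non-increasingly
ordered): if `‖p − e₁‖ ≤ δ` then `pbar = e₁`; otherwise `pbar` agrees with `r` on the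
first `l*` entries, has `1 − Σ_{i=1}^{l*} rᵢ` at position `l*+1`, and `0` afterwards. -/
def IsSteepest {k : ℕ} (δ : ℝ) (p pbar : Fin k → ℝ) : Prop :=
  (l1dist p (e1 k) ≤ δ ∧ pbar = e1 k) ∨
  (δ < l1dist p (e1 k) ∧ ∃ lstar : ℕ, IsTruncIdx δ p lstar ∧
    ∀ i : Fin k, pbar i =
      if (i : ℕ) < lstar then steepR δ p i
      else if (i : ℕ) = lstar then 1 - psum (steepR δ p) lstar
      else 0)

/-- `ε(x) = Σ_{i : pᵢ ≥ x} (pᵢ − x)`. -/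
def epsFn {k : ℕ} (p : Fin k → ℝ) (x : ℝ) : ℝ :=
  ∑ i ∈ univ.filter (fun i : Fin k => x ≤ p i), (p i - x)

/-- `γ(y) = Σ_{i : pᵢ ≤ y} (y − pᵢ)`. -/
def gammaFn {k : ℕ} (p : Fin k → ℝ) (y : ℝ) : ℝ :=
  ∑ i ∈ univ.filter (fun i : Fin k => p i ≤ y), (y - p i)

/-- `pflat` is the flattest `δ`-approximation of `p` built from the cutting level `x*` and
the filling level `y*`: `x*, y* ∈ [0,1]`, `ε(x*) = γ(y*) = δ/2`, and `pflat` equals `x*`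
where `pᵢ ≥ x*`, equals `y*` where `pᵢ ≤ y*`, and equals `pᵢ` otherwise. -/
def IsFlattestWith {k : ℕ} (δ : ℝ) (p pflat : Fin k → ℝ) (x y : ℝ) : Prop :=
  x ∈ Set.Icc (0 : ℝ) 1 ∧ y ∈ Set.Icc (0 : ℝ) 1 ∧
  epsFn p x = δ / 2 ∧ gammaFn p y = δ / 2 ∧
  ∀ i : Fin k, pflat i = if x ≤ p i then x else if p i ≤ y then y else p i

/-- `pflat` is the flattest `δ`-approximation `p̲^(δ)` of `p` (assumed non-increasingly
ordered): if `‖p − η‖ ≤ δ` then `pflat = η`; otherwise it is obtained by cutting at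
level `x*` and filling at level `y*`. -/
def IsFlattest {k : ℕ} (δ : ℝ) (p pflat : Fin k → ℝ) : Prop :=
  (l1dist p (unif k) ≤ δ ∧ pflat = unif k) ∨
  (δ < l1dist p (unif k) ∧ ∃ x y : ℝ, IsFlattestWith δ p pflat x y)

end

/-! Outside the trivial case `p̄ = e₁`, the vector `p̄` raises `p₁` by `δ/2` and removes the
same mass from the tail by cutting it at position `l* + 1`. The choice of `l*` makes the cut
entry lie between `0` and `p_{l*+1}`, which gives monotonicity. Since `p̄ ≥ p` on the first `l*`
entries, `p̄ ≤ p` on the others, and both have total mass `1`, the distance `‖p − p̄‖` is twice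
the added mass, i.e. exactly `δ`. -/

theorem sum_abs_sub_eq_two_mul_sum_sub {ι : Type*} [Fintype ι] (a b : ι → ℝ)
    (s : Finset ι) (hsum : ∑ i, a i = ∑ i, b i) (hs : ∀ i ∈ s, a i ≤ b i)
    (hsc : ∀ i ∉ s, b i ≤ a i) :
    ∑ i, |a i - b i| = 2 * ∑ i ∈ s, (b i - a i) := by
  classical
  have hzero : ∑ i ∈ s, (a i - b i) + ∑ i ∈ sᶜ, (a i - b i) = 0 := by
    rw [sum_add_sum_compl, sum_sub_distrib, hsum, sub_self]
  have hin : ∑ i ∈ s, |a i - b i| = ∑ i ∈ s, (b i - a i) :=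
    sum_congr rfl fun i hi => by rw [abs_sub_comm, abs_of_nonneg (sub_nonneg.2 (hs i hi))]
  have hout : ∑ i ∈ sᶜ, |a i - b i| = ∑ i ∈ sᶜ, (a i - b i) :=
    sum_congr rfl fun i hi => abs_of_nonneg (sub_nonneg.2 (hsc i (mem_compl.1 hi)))
  have hneg : ∑ i ∈ s, (a i - b i) = -∑ i ∈ s, (b i - a i) := by
    rw [← sum_neg_distrib]; exact sum_congr rfl fun _ _ => by ring
  rw [← sum_add_sum_compl s, hin, hout]
  linarith

section psum

variable {k : ℕ} (a : Fin k → ℝ)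

lemma psum_succ {l : ℕ} (hl : l < k) : psum a (l + 1) = psum a l + a ⟨l, hl⟩ := by
  have hs : univ.filter (fun i : Fin k => (i : ℕ) < l + 1) =
      insert ⟨l, hl⟩ (univ.filter fun i : Fin k => (i : ℕ) < l) := by
    ext i
    simp only [mem_filter, mem_univ, true_and, mem_insert, Fin.ext_iff]
    omega
  rw [psum, hs, sum_insert (by simp), add_comm]
  rfl

lemma psum_of_le {l : ℕ} (hl : k ≤ l) : psum a l = ∑ i, a i := by
  rw [psum, filter_true_of_mem fun i _ => i.isLt.trans_le hl]

end psum

section steepR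

variable {k : ℕ} {δ : ℝ} {p : Fin k → ℝ}

lemma steepR_of_ne_zero {i : Fin k} (hi : (i : ℕ) ≠ 0) : steepR δ p i = p i := if_neg hi

lemma le_steepR (hδ : 0 ≤ δ) (i : Fin k) : p i ≤ steepR δ p i := by
  unfold steepR; split_ifs <;> linarith

lemma antitone_steepR (hδ : 0 ≤ δ) (hp : Antitone p) : Antitone (steepR δ p) := by
  intro i j hij
  by_cases hj : (j : ℕ) = 0
  · rw [show i = j from Fin.ext (by have := Fin.le_def.1 hij; omega)]
  · rw [steepR_of_ne_zero hj]
    exact (hp hij).trans (le_steepR hδ i)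

lemma sum_steepR_sub (δ : ℝ) (p : Fin k → ℝ) {s : Finset (Fin k)} {i₀ : Fin k}
    (h₀ : (i₀ : ℕ) = 0) (hi₀ : i₀ ∈ s) : ∑ i ∈ s, (steepR δ p i - p i) = δ / 2 := by
  have h : ∀ i ∈ s, steepR δ p i - p i = if i = i₀ then δ / 2 else 0 := fun i _ => by
    simp only [steepR, Fin.ext_iff, h₀]; split_ifs <;> ring
  rw [sum_congr rfl h, sum_ite_eq' s i₀, if_pos hi₀]

end steepR

section truncToUnitMass

variable {k : ℕ}

def truncToUnitMass (r : Fin k → ℝ) (l : ℕ) : Fin k → ℝ := fun i =>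
  if (i : ℕ) < l then r i else if (i : ℕ) = l then 1 - psum r l else 0

variable {r : Fin k → ℝ} {l : ℕ}

lemma sum_truncToUnitMass (hl : l < k) : ∑ i, truncToUnitMass r l i = 1 := by
  have hrest : ∑ i ∈ univ.filter (fun i : Fin k => ¬(i : ℕ) < l),
      (if (i : ℕ) = l then 1 - psum r l else 0) = 1 - psum r l := by
    rw [sum_ite, sum_const_zero, add_zero, filter_filter,
      show univ.filter (fun i : Fin k => ¬(i : ℕ) < l ∧ (i : ℕ) = l) = {⟨l, hl⟩} by
        ext i; simp [Fin.ext_iff]; omega, sum_singleton]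
  unfold truncToUnitMass
  rw [sum_ite, hrest, psum]
  ring

lemma truncToUnitMass_of_le (hl : k ≤ l) : truncToUnitMass r l = r :=
  funext fun i => if_pos (i.isLt.trans_le hl)

lemma truncToUnitMass_nonneg (hr : ∀ i, 0 ≤ r i) (hS : psum r l ≤ 1) (i : Fin k) :
    0 ≤ truncToUnitMass r l i := by
  unfold truncToUnitMass; split_ifs <;> linarith [hr i]

lemma truncToUnitMass_le_of_not_lt {q : Fin k → ℝ} (hq : ∀ i, 0 ≤ q i)
    (hcut : ∀ hl : l < k, 1 - psum r l ≤ q ⟨l, hl⟩) {i : Fin k} (hi : ¬(i : ℕ) < l) :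
    truncToUnitMass r l i ≤ q i := by
  unfold truncToUnitMass
  rw [if_neg hi]
  split_ifs with h
  · convert hcut (h ▸ i.isLt)
  · exact hq i

lemma antitone_truncToUnitMass (hr : Antitone r) (hr₀ : ∀ i, 0 ≤ r i) (hS : psum r l ≤ 1)
    (hcut : ∀ hl : l < k, 1 - psum r l ≤ r ⟨l, hl⟩) : Antitone (truncToUnitMass r l) := by
  intro i j hij
  by_cases hj : (j : ℕ) < l
  · have hi : (i : ℕ) < l := (Fin.le_def.1 hij).trans_lt hj
    simp only [truncToUnitMass, if_pos hi, if_pos hj]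
    exact hr hij
  by_cases hi : (i : ℕ) < l
  · calc truncToUnitMass r l j ≤ r j := truncToUnitMass_le_of_not_lt hr₀ hcut hj
      _ ≤ r i := hr hij
      _ = truncToUnitMass r l i := (if_pos hi).symm
  · have hji : truncToUnitMass r l j ≤ 0 ∨ i = j := by
      unfold truncToUnitMass; rw [if_neg hj]
      split_ifs with h
      · exact .inr (Fin.ext (by have := Fin.le_def.1 hij; omega))
      · exact .inl le_rfl
    rcases hji with hji | rfl
    · exact hji.trans (truncToUnitMass_nonneg hr₀ hS i)
    · exact le_rfl

end truncToUnitMass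

lemma sum_truncToUnitMass_steepR {k : ℕ} {δ : ℝ} {p : Fin k → ℝ} {l : ℕ} (hδ : 0 ≤ δ)
    (hk : 0 < k) (hp : ∑ i, p i = 1) (hlk : l ≤ k) (hS : psum (steepR δ p) l ≤ 1) :
    ∑ i, truncToUnitMass (steepR δ p) l i = 1 := by
  rcases hlk.lt_or_eq with hl | rfl
  · exact sum_truncToUnitMass hl
  · have hsum_r : ∑ i, (steepR δ p i - p i) = δ / 2 :=
      sum_steepR_sub δ p (i₀ := ⟨0, hk⟩) rfl (mem_univ _)
    rw [truncToUnitMass_of_le le_rfl]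
    rw [psum_of_le _ le_rfl] at hS
    linarith [sum_sub_distrib (s := univ) (steepR δ p) p]

lemma isProbDist_e1 {k : ℕ} (hk : 0 < k) : IsProbDist (e1 k) := by
  refine ⟨fun i => by unfold e1; split_ifs <;> norm_num, ?_⟩
  have h : ∀ i : Fin k, e1 k i = if i = ⟨0, hk⟩ then 1 else 0 := fun i => by
    simp [e1, Fin.ext_iff]
  rw [sum_congr rfl fun i _ => h i, sum_ite_eq' univ, if_pos (mem_univ _)]

lemma antitone_e1 (k : ℕ) : Antitone (e1 k) := by
  intro i j hij
  have := Fin.le_def.1 hij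
  unfold e1
  split_ifs <;> first | omega | norm_num

/-- the steepest `δ`-approximation of `p` is a non-increasingly ordered
probability distribution within ℓ¹ distance `δ` of `p`. -/
theorem steepest_isProbDist {k : ℕ} (δ : ℝ) (hδ : 0 ≤ δ)
    (p : Fin k → ℝ) (hp : IsProbDist p) (hord : Antitone p)
    (pbar : Fin k → ℝ) (hpbar : IsSteepest δ p pbar) :
    IsProbDist pbar ∧ Antitone pbar ∧ l1dist p pbar ≤ δ := by
  have hk : 0 < k := Nat.pos_of_ne_zero fun h => by subst h; simpa using hp.2
  rcases hpbar with ⟨hd, rfl⟩ | ⟨-, l, ⟨hl₁, hlk, hS, hS'⟩, hdef⟩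
  · exact ⟨isProbDist_e1 hk, antitone_e1 k, hd⟩
  obtain rfl : pbar = truncToUnitMass (steepR δ p) l := funext hdef
  have hr₀ : ∀ i, 0 ≤ steepR δ p i := fun i => (hp.1 i).trans (le_steepR hδ i)
  have hcut : ∀ hl : l < k, 1 - psum (steepR δ p) l ≤ steepR δ p ⟨l, hl⟩ := fun hl => by
    linarith [hS' hl, psum_succ (steepR δ p) hl]
  have hcut_p : ∀ hl : l < k, 1 - psum (steepR δ p) l ≤ p ⟨l, hl⟩ := fun hl =>
    (hcut hl).trans_eq (steepR_of_ne_zero (by simp; omega))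
  have hsum := sum_truncToUnitMass_steepR hδ hk hp.2 hlk hS
  refine ⟨⟨truncToUnitMass_nonneg hr₀ hS, hsum⟩,
    antitone_truncToUnitMass (antitone_steepR hδ hord) hr₀ hS hcut, ?_⟩
  rw [l1dist, sum_abs_sub_eq_two_mul_sum_sub p _ (univ.filter fun i : Fin k => (i : ℕ) < l)
    (hp.2.trans hsum.symm) (fun i hi => ?_) (fun i hi => ?_)]
  · rw [sum_congr rfl fun i hi => by rw [truncToUnitMass, if_pos (mem_filter.1 hi).2],
      sum_steepR_sub δ p (i₀ := ⟨0, hk⟩) rfl (by simp; omega)]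
    linarith
  · rw [truncToUnitMass, if_pos (mem_filter.1 hi).2]
    exact le_steepR hδ i
  · exact truncToUnitMass_le_of_not_lt hp.1 hcut_p (by simpa using hi)
end

section
/- Let p be a probability distribution on k elements with non-increasingly ordered entries and let δ ≥ 0. Then the flattest δ-approximation p̲^(δ) of p is a probability distribution (its entries are nonnegative and sum to 1), its entries are non-increasingly ordered, and ‖p − p̲^(δ)‖ ≤ δ. -/
open Finset

/-!
Away from the trivial case, the flattest approximation clamps every entry of `p` to the
interval `[y*, x*]`, and clamping is monotone, so order and nonnegativity survive. Writing
`ε(x) = Σ (pᵢ - x)⁺` and `γ(y) = Σ (pᵢ - y)⁻`, clamping removes exactly `ε(x*) = δ/2` of mass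
above and adds `γ(y*) = δ/2` below, so the total mass stays `1` and the ℓ¹ distance is `δ`.
This needs `y* < x*`, which holds because at the mean `u = 1/k` we have `ε(u) = γ(u) = ‖p − η‖/2`,
which exceeds `δ/2`, while `ε` is antitone and `γ` is monotone.
-/

open Finset

variable {k : ℕ}

lemma ne_zero_of_sum_eq_one {p : Fin k → ℝ} (hsum : ∑ i, p i = 1) : k ≠ 0 := by
  rintro rfl
  simp at hsum

lemma isProbDist_unif (hk : k ≠ 0) : IsProbDist (unif k) :=
  ⟨fun _ => inv_nonneg.mpr k.cast_nonneg, by simp [unif, hk]⟩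

section Levels

variable (p : Fin k → ℝ)

lemma epsFn_eq_sum_posPart (x : ℝ) : epsFn p x = ∑ i, (p i - x)⁺ := by
  simp only [epsFn, sum_filter, posPart_eq_ite, sub_nonneg]

lemma gammaFn_eq_sum_negPart (y : ℝ) : gammaFn p y = ∑ i, (p i - y)⁻ := by
  simp only [gammaFn, sum_filter, negPart_eq_ite, sub_nonpos, neg_sub]

lemma epsFn_antitone : Antitone (epsFn p) := fun a b hab => by
  simp only [epsFn_eq_sum_posPart]
  exact sum_le_sum fun i _ => posPart_mono (by linarith)

lemma gammaFn_monotone : Monotone (gammaFn p) := fun a b hab => by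
  simp only [gammaFn_eq_sum_negPart]
  exact sum_le_sum fun i _ => negPart_anti (by linarith)

lemma epsFn_sub_gammaFn (u : ℝ) : epsFn p u - gammaFn p u = ∑ i, (p i - u) := by
  simp only [epsFn_eq_sum_posPart, gammaFn_eq_sum_negPart, ← sum_sub_distrib,
    posPart_sub_negPart]

lemma epsFn_add_gammaFn (u : ℝ) : epsFn p u + gammaFn p u = ∑ i, |p i - u| := by
  simp only [epsFn_eq_sum_posPart, gammaFn_eq_sum_negPart, ← sum_add_distrib,
    posPart_add_negPart]

variable {p}

lemma l1dist_unif_eq_two_mul (hsum : ∑ i, p i = 1) :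
    l1dist p (unif k) = 2 * epsFn p (k : ℝ)⁻¹ ∧ l1dist p (unif k) = 2 * gammaFn p (k : ℝ)⁻¹ := by
  have hk : (k : ℝ) ≠ 0 := Nat.cast_ne_zero.mpr (ne_zero_of_sum_eq_one hsum)
  have hbalance : epsFn p (k : ℝ)⁻¹ - gammaFn p (k : ℝ)⁻¹ = 0 := by
    simp [epsFn_sub_gammaFn, sum_sub_distrib, hsum, hk]
  have htotal : epsFn p (k : ℝ)⁻¹ + gammaFn p (k : ℝ)⁻¹ = l1dist p (unif k) :=
    epsFn_add_gammaFn p _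
  constructor <;> linarith

end Levels

/-- The entrywise map of `IsFlattestWith`: cut at level `x`, fill up to level `y`. -/
noncomputable def cutFill (x y a : ℝ) : ℝ := if x ≤ a then x else if a ≤ y then y else a

section CutFill

variable {x y : ℝ}

lemma cutFill_nonneg (hx : 0 ≤ x) (hy : 0 ≤ y) {a : ℝ} (ha : 0 ≤ a) : 0 ≤ cutFill x y a := by
  unfold cutFill
  split_ifs <;> assumption

lemma cutFill_monotone (hyx : y ≤ x) : Monotone (cutFill x y) := fun a b hab => by
  unfold cutFill
  split_ifs <;> linarith

lemma cutFill_eq (hyx : y < x) (a : ℝ) : cutFill x y a = a - (a - x)⁺ + (a - y)⁻ := by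
  unfold cutFill
  split_ifs <;> simp only [posPart_eq_ite, negPart_eq_ite] <;> split_ifs <;> linarith

lemma abs_sub_cutFill (hyx : y < x) (a : ℝ) : |a - cutFill x y a| = (a - x)⁺ + (a - y)⁻ := by
  unfold cutFill
  split_ifs <;> simp only [posPart_eq_ite, negPart_eq_ite, abs_eq_max_neg] <;> split_ifs <;>
    simp only [max_def] <;> split_ifs <;> linarith

variable (p : Fin k → ℝ)

lemma sum_cutFill (hyx : y < x) :
    ∑ i, cutFill x y (p i) = ∑ i, p i - epsFn p x + gammaFn p y := by
  simp only [cutFill_eq hyx, sum_add_distrib, sum_sub_distrib, epsFn_eq_sum_posPart,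
    gammaFn_eq_sum_negPart]

lemma l1dist_cutFill (hyx : y < x) :
    l1dist p (fun i => cutFill x y (p i)) = epsFn p x + gammaFn p y := by
  simp only [l1dist, abs_sub_cutFill hyx, sum_add_distrib, epsFn_eq_sum_posPart,
    gammaFn_eq_sum_negPart]

end CutFill

theorem flattest_isProbDist_general {k : ℕ} (δ : ℝ)
    (p : Fin k → ℝ) (hp : IsProbDist p) (hord : Antitone p)
    (pflat : Fin k → ℝ) (hpflat : IsFlattest δ p pflat) :
    IsProbDist pflat ∧ Antitone pflat ∧ l1dist p pflat ≤ δ := by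
  rcases hpflat with ⟨hle, rfl⟩ | ⟨hlt, x, y, hx, hy, hεx, hγy, hval⟩
  · exact ⟨isProbDist_unif (ne_zero_of_sum_eq_one hp.2), fun _ _ _ => le_rfl, hle⟩
  obtain ⟨hlε, hlγ⟩ := l1dist_unif_eq_two_mul hp.2
  have hux : (k : ℝ)⁻¹ < x := (epsFn_antitone p).reflect_lt (by linarith)
  have hyu : y < (k : ℝ)⁻¹ := (gammaFn_monotone p).reflect_lt (by linarith)
  have hyx : y < x := hyu.trans hux
  obtain rfl : pflat = fun i => cutFill x y (p i) := funext hval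
  refine ⟨⟨fun i => cutFill_nonneg hx.1 hy.1 (hp.1 i), ?_⟩,
    (cutFill_monotone hyx.le).comp_antitone hord, ?_⟩
  · rw [sum_cutFill p hyx, hp.2, hεx, hγy]
    ring
  · rw [l1dist_cutFill p hyx, hεx, hγy]
    linarith

/-- the flattest `δ`-approximation of `p` is a non-increasingly ordered
probability distribution within ℓ¹ distance `δ` of `p`. -/
theorem flattest_isProbDist {k : ℕ} (δ : ℝ) (hδ : 0 ≤ δ)
    (p : Fin k → ℝ) (hp : IsProbDist p) (hord : Antitone p)
    (pflat : Fin k → ℝ) (hpflat : IsFlattest δ p pflat) :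
    IsProbDist pflat ∧ Antitone pflat ∧ l1dist p pflat ≤ δ :=
  flattest_isProbDist_general δ p hp hord pflat hpflat
end
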